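/- arXiv:1711.06946 — 6 statements merged into one kernel-verified Lean document; each statement's English description precedes it below -/
import Mathlib

section
/- Every nonzero submodule of a monoform module is again monoform. -/
/-- A nonzero module `H` is *monoform* if for every nonzero submodule `L` of `H`,
no nonzero submodule of `H` is isomorphic to a submodule of `H ⧸ L`. -/
def Monoform (R : Type*) [Ring R] (H : Type*) [AddCommGroup H] [Module R H] : Prop :=
  Nontrivial H ∧ ∀ L : Submodule R H, L ≠ ⊥ →
    ∀ (N : Submodule R H) (N' : Submodule R (H ⧸ L)),
      N ≠ ⊥ → ¬ Nonempty (N ≃ₗ[R] N')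

/-- Every nonzero submodule of a monoform module is again monoform. -/
theorem monoform_of_submodule (R : Type*) [Ring R] (H : Type*) [AddCommGroup H]
    [Module R H] (hH : Monoform R H) (K : Submodule R H) (hK : K ≠ ⊥) :
    Monoform R K := by
  obtain ⟨hHnt, hHprop⟩ := hH
  have hinj : Function.Injective K.subtype := K.injective_subtype
  refine ⟨Submodule.nontrivial_iff_ne_bot.mpr hK, ?_⟩
  intro L hL N N' hN ⟨e⟩
  -- image submodules in H
  have hbot : ∀ p : Submodule R K, p.map K.subtype = ⊥ → p = ⊥ := by
    intro p hp
    rw [Submodule.eq_bot_iff] at hp ⊢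
    intro x hx
    have := hp (K.subtype x) (Submodule.mem_map_of_mem hx)
    exact hinj (by simpa using this)
  set L' : Submodule R H := L.map K.subtype with hL'def
  have hL' : L' ≠ ⊥ := fun h => hL (hbot L h)
  have hNmap : N.map K.subtype ≠ ⊥ := fun h => hN (hbot N h)
  -- the induced injective map K ⧸ L →ₗ H ⧸ L'
  have hker : L ≤ LinearMap.ker (L'.mkQ.comp K.subtype) := by
    intro x hx
    simp only [LinearMap.mem_ker, LinearMap.comp_apply, Submodule.mkQ_apply,
      Submodule.Quotient.mk_eq_zero]
    exact Submodule.mem_map_of_mem hx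
  set f : (K ⧸ L) →ₗ[R] (H ⧸ L') := L.liftQ (L'.mkQ.comp K.subtype) hker with hfdef
  have hfinj : Function.Injective f := by
    rw [← LinearMap.ker_eq_bot, hfdef, Submodule.ker_liftQ_eq_bot]
    intro x hx
    simp only [LinearMap.mem_ker, LinearMap.comp_apply, Submodule.mkQ_apply,
      Submodule.Quotient.mk_eq_zero, hL'def] at hx
    obtain ⟨y, hy, hyx⟩ := hx
    rwa [← hinj hyx]
  -- assemble the isomorphism N.map K.subtype ≃ N'.map f
  have e1 : (N.map K.subtype) ≃ₗ[R] N := (Submodule.equivMapOfInjective _ hinj N).symm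
  have e2 : N' ≃ₗ[R] (N'.map f) := Submodule.equivMapOfInjective f hfinj N'
  exact hHprop L' hL' (N.map K.subtype) (N'.map f) hNmap ⟨e1.trans (e.trans e2)⟩
end

section
/- Every nonzero Noetherian module has a monoform submodule. -/
/-- Every nonzero Noetherian module has a monoform submodule. -/
theorem exists_monoform_submodule (R : Type*) [Ring R] (M : Type*) [AddCommGroup M]
    [Module R M] [IsNoetherian R M] [Nontrivial M] :
    ∃ K : Submodule R M, K ≠ ⊥ ∧ Monoform R K := by
  classical
  -- the set of kernels of nonzero partial endomorphisms of `M`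
  set S : Set (Submodule R M) :=
    {K : Submodule R M | ∃ (A : Submodule R M) (f : A →ₗ[R] M),
      f ≠ 0 ∧ (LinearMap.ker f).map A.subtype = K} with hS
  have hSne : S.Nonempty := by
    refine ⟨⊥, ⊤, (⊤ : Submodule R M).subtype, ?_, ?_⟩
    · obtain ⟨m, hm⟩ := exists_ne (0 : M)
      intro h
      exact hm (by simpa using LinearMap.congr_fun h ⟨m, trivial⟩)
    · rw [Submodule.ker_subtype, Submodule.map_bot]
  obtain ⟨K, hKS, hKmax⟩ := (set_has_maximal_iff_noetherian.mpr inferInstance) S hSne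
  obtain ⟨A, f, hf0, hker⟩ := hKS
  refine ⟨LinearMap.range f, ?_, ?_, ?_⟩
  · exact fun h => hf0 (LinearMap.range_eq_bot.mp h)
  · exact Submodule.nontrivial_iff_ne_bot.mpr fun h => hf0 (LinearMap.range_eq_bot.mp h)
  · intro L hL N N' hN hne
    obtain ⟨e⟩ := hne
    -- the surjection `A → H ⧸ L`
    set φ : A →ₗ[R] ((LinearMap.range f : Submodule R M) ⧸ L) := L.mkQ ∘ₗ f.rangeRestrict with hφ
    have hφsurj : Function.Surjective φ := by
      exact (Submodule.mkQ_surjective L).comp f.surjective_rangeRestrict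
    set B : Submodule R A := N'.comap φ with hB
    -- the corestriction `B → N'`
    have hmemN' : ∀ x : B, φ x ∈ N' := fun x => x.2
    set g1 : B →ₗ[R] N' := LinearMap.codRestrict N' (φ.domRestrict B) hmemN' with hg1
    set ψ : B →ₗ[R] M :=
      (LinearMap.range f).subtype ∘ₗ N.subtype ∘ₗ e.symm.toLinearMap ∘ₗ g1 with hψ
    have hψ_eq : ∀ x : B, ψ x = ((e.symm ⟨φ x, x.2⟩ : N) : M) := by
      intro x; rfl
    -- ψ x = 0 iff φ x = 0
    have hψ_zero : ∀ x : B, ψ x = 0 ↔ φ (x : A) = 0 := by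
      intro x
      rw [hψ_eq]
      constructor
      · intro h
        have h1 : (e.symm ⟨φ x, x.2⟩ : N) = 0 := by
          apply Subtype.ext; apply Subtype.ext
          simpa using h
        have h2 : (⟨φ x, x.2⟩ : N') = 0 := by
          have := congrArg e h1
          simpa using this
        simpa using congrArg Subtype.val h2
      · intro h
        have h2 : (⟨φ x, x.2⟩ : N') = 0 := Subtype.ext h
        rw [h2]
        simp
    -- the transported map on `B.map A.subtype`
    set eqv : (B.map A.subtype : Submodule R M) ≃ₗ[R] B :=
      (Submodule.equivMapOfInjective A.subtype A.injective_subtype B).symm with heqv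
    have heqv_coe : ∀ y : (B.map A.subtype : Submodule R M), (((eqv y : B) : A) : M) = (y : M) := by
      intro y
      have := (Submodule.equivMapOfInjective A.subtype A.injective_subtype B).apply_symm_apply y
      calc (((eqv y : B) : A) : M)
          = ((Submodule.equivMapOfInjective A.subtype A.injective_subtype B (eqv y) : M)) := rfl
        _ = (y : M) := by rw [this]
    set ψ' : (B.map A.subtype : Submodule R M) →ₗ[R] M := ψ ∘ₗ (eqv : _ →ₗ[R] B) with hψ'
    -- ψ' is nonzero
    have hψ'0 : ψ' ≠ 0 := by
      obtain ⟨n, hnN, hn0⟩ := Submodule.exists_mem_ne_zero_of_ne_bot hN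
      obtain ⟨a, ha⟩ := hφsurj ((e ⟨n, hnN⟩ : N') : (LinearMap.range f : Submodule R M) ⧸ L)
      have haB : a ∈ B := by
        rw [hB, Submodule.mem_comap, ha]; exact (e ⟨n, hnN⟩).2
      have hmem : ((a : M)) ∈ B.map A.subtype := ⟨a, haB, rfl⟩
      intro h
      have h0 : ψ' ⟨(a : M), hmem⟩ = 0 := by rw [h]; rfl
      have heq : (eqv ⟨(a : M), hmem⟩ : B) = ⟨a, haB⟩ := by
        apply Subtype.ext; apply Subtype.ext
        exact heqv_coe ⟨(a : M), hmem⟩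
      have : ψ ⟨a, haB⟩ = 0 := by
        have : ψ (eqv ⟨(a : M), hmem⟩) = 0 := h0
        rwa [heq] at this
      rw [hψ_eq] at this
      have hg : (⟨φ a, haB⟩ : N') = e ⟨n, hnN⟩ := Subtype.ext ha
      rw [hg] at this
      simp only [LinearEquiv.symm_apply_apply] at this
      exact hn0 (by
        apply Subtype.ext
        simpa using this)
    -- the new kernel
    set K' : Submodule R M := (LinearMap.ker ψ').map (B.map A.subtype).subtype with hK'
    have hK'S : K' ∈ S := ⟨B.map A.subtype, ψ', hψ'0, rfl⟩
    -- membership lemma for K'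
    have hK'mem : ∀ (a : A), a ∈ B → φ a = 0 → ((a : M)) ∈ K' := by
      intro a haB hφa
      have hmem : ((a : M)) ∈ B.map A.subtype := ⟨a, haB, rfl⟩
      refine ⟨⟨(a : M), hmem⟩, ?_, rfl⟩
      have heq : (eqv ⟨(a : M), hmem⟩ : B) = ⟨a, haB⟩ := by
        apply Subtype.ext; apply Subtype.ext
        exact heqv_coe ⟨(a : M), hmem⟩
      show ψ (eqv ⟨(a : M), hmem⟩) = 0
      rw [heq, hψ_zero]
      exact hφa
    -- K ≤ K'
    have hKle : K ≤ K' := by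
      intro m hm
      rw [← hker] at hm
      obtain ⟨a, haf, rfl⟩ := hm
      have hfr : f.rangeRestrict a = 0 := by
        apply Subtype.ext
        simpa using haf
      have hφa : φ a = 0 := by rw [hφ]; simp [hfr]
      have haB : a ∈ B := by
        rw [hB, Submodule.mem_comap, hφa]; exact N'.zero_mem
      exact hK'mem a haB hφa
    -- strictness: pick a nonzero element of L
    obtain ⟨l, hlL, hl0⟩ := Submodule.exists_mem_ne_zero_of_ne_bot hL
    obtain ⟨a, ha⟩ := f.surjective_rangeRestrict l
    have hφa : φ a = 0 := by
      rw [hφ]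
      show L.mkQ (f.rangeRestrict a) = 0
      rw [ha, Submodule.mkQ_apply, Submodule.Quotient.mk_eq_zero]
      exact hlL
    have haB : a ∈ B := by
      rw [hB, Submodule.mem_comap, hφa]; exact N'.zero_mem
    have haK' : ((a : M)) ∈ K' := hK'mem a haB hφa
    have haK : ((a : M)) ∉ K := by
      rw [← hker]
      rintro ⟨a', ha'f, ha'⟩
      have : a' = a := Subtype.ext ha'
      subst this
      have : f a' = 0 := ha'f
      have hfl : ((l : (LinearMap.range f : Submodule R M)) : M) = 0 := by
        rw [← ha] at *
        simpa using this
      exact hl0 (Subtype.ext hfl)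
    exact hKmax K' hK'S (lt_of_le_of_ne hKle (fun h => haK (h ▸ haK')))
end

section
/- Every compressible module is monoform, provided it has a monoform submodule; in particular every compressible Noetherian module is monoform. -/
/-- A nonzero module `H` is *compressible* if every nonzero submodule of `H`
contains a submodule isomorphic to `H`. -/
def Compressible (R : Type*) [Ring R] (H : Type*) [AddCommGroup H] [Module R H] : Prop :=
  Nontrivial H ∧ ∀ L : Submodule R H, L ≠ ⊥ →
    ∃ K : Submodule R H, K ≤ L ∧ Nonempty (K ≃ₗ[R] H)

/-- If every nonzero partial endomorphism of `H` has trivial kernel, then `H` is monoform. -/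
theorem monoform_of_inj {R : Type*} [Ring R] {H : Type*} [AddCommGroup H] [Module R H]
    [Nontrivial H]
    (h : ∀ (N : Submodule R H) (f : N →ₗ[R] H), f ≠ 0 → LinearMap.ker f = ⊥) :
    Monoform R H := by
  refine ⟨‹_›, fun L hL N N' hN hiso => ?_⟩
  obtain ⟨e⟩ := hiso
  -- N' is nonzero
  obtain ⟨x, hxN, hx0⟩ := N.ne_bot_iff.mp hN
  have hex : e ⟨x, hxN⟩ ≠ 0 := by
    intro hc
    apply hx0
    have : (⟨x, hxN⟩ : N) = 0 := e.injective (by simpa using hc)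
    simpa using congrArg Subtype.val this
  set P : Submodule R H := N'.comap L.mkQ with hP
  have hmem : ∀ x ∈ P, L.mkQ x ∈ N' := fun x hx => hx
  set g : P →ₗ[R] H :=
    N.subtype ∘ₗ (e.symm.toLinearMap ∘ₗ L.mkQ.restrict hmem) with hg
  have hgval : ∀ (y : P), g y = ↑(e.symm ⟨L.mkQ y, hmem y y.2⟩) := fun y => rfl
  -- g is nonzero
  have hg0 : g ≠ 0 := by
    intro hc
    obtain ⟨z, hz⟩ := L.mkQ_surjective ↑(e ⟨x, hxN⟩)
    have hzP : z ∈ P := by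
      simp only [hP, Submodule.mem_comap, hz]
      exact (e ⟨x, hxN⟩).2
    have := hgval ⟨z, hzP⟩
    rw [hc] at this
    simp only [LinearMap.zero_apply] at this
    have h2 : (⟨L.mkQ z, hmem z hzP⟩ : N') = e ⟨x, hxN⟩ := by
      apply Subtype.ext; simp [hz]
    rw [h2, LinearEquiv.symm_apply_apply] at this
    exact hx0 (by simpa using this.symm)
  -- but g has nonzero kernel
  obtain ⟨l, hlL, hl0⟩ := L.ne_bot_iff.mp hL
  have hlP : l ∈ P := by
    simp only [hP, Submodule.mem_comap]
    have : L.mkQ l = 0 := (Submodule.Quotient.mk_eq_zero L).mpr hlL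
    rw [this]; exact N'.zero_mem
  have hker : (⟨l, hlP⟩ : P) ∈ LinearMap.ker g := by
    rw [LinearMap.mem_ker, hgval]
    have h0 : (⟨L.mkQ l, hmem l hlP⟩ : N') = 0 := by
      apply Subtype.ext
      simpa using (Submodule.Quotient.mk_eq_zero L).mpr hlL
    rw [h0]
    simp
  have : LinearMap.ker g ≠ ⊥ :=
    (LinearMap.ker g).ne_bot_iff.mpr ⟨⟨l, hlP⟩, hker, by simpa using hl0⟩
  exact this (h P g hg0)

/-- Monoform pulls back along injective linear maps. -/
theorem monoform_of_injective {R : Type*} [Ring R] {H K : Type*} [AddCommGroup H] [Module R H]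
    [AddCommGroup K] [Module R K] [Nontrivial H] (hM : Monoform R K)
    (ι : H →ₗ[R] K) (hι : Function.Injective ι) : Monoform R H := by
  refine ⟨‹_›, fun L hL N N' hN hiso => ?_⟩
  obtain ⟨e⟩ := hiso
  have hmapinj := Submodule.map_injective_of_injective hι
  have hLK : L.map ι ≠ ⊥ := fun hc => hL (hmapinj (by simpa using hc))
  have hNK : N.map ι ≠ ⊥ := fun hc => hN (hmapinj (by simpa using hc))
  have hle : L ≤ (L.map ι).comap ι := fun x hx => Submodule.mem_map_of_mem hx
  set ι' : (H ⧸ L) →ₗ[R] (K ⧸ L.map ι) := Submodule.mapQ L (L.map ι) ι hle with hι'def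
  have hι' : Function.Injective ι' := by
    rw [← LinearMap.ker_eq_bot]
    rw [Submodule.eq_bot_iff]
    intro a ha
    obtain ⟨x, rfl⟩ := Submodule.Quotient.mk_surjective L a
    rw [LinearMap.mem_ker, hι'def, Submodule.mapQ_apply] at ha
    show Submodule.Quotient.mk x = 0
    have : ι x ∈ L.map ι := (Submodule.Quotient.mk_eq_zero _).mp ha
    obtain ⟨y, hyL, hyx⟩ := this
    have : y = x := hι hyx
    subst this
    exact (Submodule.Quotient.mk_eq_zero _).mpr hyL
  have iso : (N.map ι) ≃ₗ[R] (N'.map ι') :=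
    ((Submodule.equivMapOfInjective ι hι N).symm.trans e).trans
      (Submodule.equivMapOfInjective ι' hι' N')
  exact hM.2 (L.map ι) hLK (N.map ι) (N'.map ι') hNK ⟨iso⟩

/-- A compressible module with a monoform submodule is monoform; in particular
every compressible Noetherian module is monoform. -/
theorem compressible_monoform (R : Type*) [Ring R] (H : Type*) [AddCommGroup H]
    [Module R H] (hC : Compressible R H) :
    ((∃ K : Submodule R H, K ≠ ⊥ ∧ Monoform R K) → Monoform R H) ∧
    (IsNoetherian R H → Monoform R H) := by
  have hnt : Nontrivial H := hC.1
  have part1 : (∃ K : Submodule R H, K ≠ ⊥ ∧ Monoform R K) → Monoform R H := by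
    rintro ⟨K, hK, hKM⟩
    obtain ⟨K', hK'le, ⟨e⟩⟩ := hC.2 K hK
    have hinj : Function.Injective (Submodule.inclusion hK'le ∘ₗ e.symm.toLinearMap) :=
      (Submodule.inclusion_injective hK'le).comp e.symm.injective
    exact monoform_of_injective hKM _ hinj
  refine ⟨part1, fun hNoeth => ?_⟩
  -- set of kernels of nonzero partial endomorphisms with nonzero kernel
  set S : Set (Submodule R H) :=
    {Ker | Ker ≠ ⊥ ∧ ∃ (N : Submodule R H) (f : N →ₗ[R] H),
        f ≠ 0 ∧ Ker = (LinearMap.ker f).map N.subtype} with hS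
  by_cases hSne : S.Nonempty
  · -- take a maximal element of S
    obtain ⟨Kmax, hKmaxS, hKmaxmax⟩ :=
      (wellFounded_gt (α := Submodule R H)).has_min S hSne
    obtain ⟨hKmax0, N, f, hf0, hKmaxeq⟩ := hKmaxS
    -- U := range f is nonzero
    set U : Submodule R H := LinearMap.range f with hU
    have hU0 : U ≠ ⊥ := by
      intro hc
      exact hf0 (LinearMap.range_eq_bot.mp (by simpa [hU] using hc))
    have hUnt : Nontrivial U := (Submodule.nontrivial_iff_ne_bot).mpr hU0
    -- U is monoform
    have hUM : Monoform R U := by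
      apply monoform_of_inj
      intro V g hg0
      by_contra hkerg
      -- build a partial endomorphism of H with strictly larger kernel
      obtain ⟨v, hvker, hv0⟩ := (LinearMap.ker g).ne_bot_iff.mp hkerg
      set fr : N →ₗ[R] U := f.rangeRestrict with hfr
      have hfrs : Function.Surjective fr := f.surjective_rangeRestrict
      set P : Submodule R N := V.comap fr with hPdef
      have hmem : ∀ x ∈ P, fr x ∈ V := fun x hx => hx
      set h : P →ₗ[R] H := U.subtype ∘ₗ (g ∘ₗ fr.restrict hmem) with hhdef
      have hval : ∀ (y : P), h y = ↑(g ⟨fr y, hmem y y.2⟩) := fun y => rfl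
      set eP := Submodule.equivMapOfInjective N.subtype N.injective_subtype P with hePdef
      set h' : (P.map N.subtype) →ₗ[R] H := h ∘ₗ eP.symm.toLinearMap with hh'def
      have hval' : ∀ (y : P), h' (eP y) = h y := by
        intro y; simp [hh'def, LinearEquiv.symm_apply_apply]
      -- h' is nonzero
      obtain ⟨w, hw0⟩ : ∃ w : V, g w ≠ 0 := by
        by_contra hc
        push_neg at hc
        exact hg0 (LinearMap.ext fun w => by simpa using hc w)
      obtain ⟨xw, hxw⟩ := hfrs ↑w
      have hxwP : xw ∈ P := by
        rw [hPdef, Submodule.mem_comap, hxw]; exact w.2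
      have hx1 : h ⟨xw, hxwP⟩ = ↑(g w) := by
        rw [hval]
        congr 2
        exact Subtype.ext hxw
      have hh'0 : h' ≠ 0 := by
        intro hc
        apply hw0
        have h2 := hval' ⟨xw, hxwP⟩
        rw [hc] at h2
        simp only [LinearMap.zero_apply] at h2
        rw [hx1] at h2
        exact (Submodule.coe_eq_zero).mp h2.symm
      -- the new kernel
      set K2 : Submodule R H := (LinearMap.ker h').map (P.map N.subtype).subtype with hK2
      -- membership criterion for K2
      have hmemK2 : ∀ (y : ↥N) (hy : y ∈ P), h ⟨y, hy⟩ = 0 → (y : H) ∈ K2 := by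
        intro y hy hy0
        refine ⟨eP ⟨y, hy⟩, ?_, ?_⟩
        · show h' (eP ⟨y, hy⟩) = 0
          rw [hval' ⟨y, hy⟩]; exact hy0
        · simp [hePdef, Submodule.coe_equivMapOfInjective_apply]
      -- Kmax ≤ K2
      have hle : Kmax ≤ K2 := by
        intro x hx
        rw [hKmaxeq] at hx
        obtain ⟨y, hyker, rfl⟩ := hx
        have hfr0 : fr y = 0 := by
          apply Subtype.ext
          simpa [hfr] using (LinearMap.mem_ker.mp hyker)
        have hyP : y ∈ P := by
          rw [hPdef, Submodule.mem_comap, hfr0]; exact V.zero_mem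
        apply hmemK2 y hyP
        rw [hval]
        have : (⟨fr ↑(⟨y, hyP⟩ : P), hmem y hyP⟩ : V) = 0 := Subtype.ext hfr0
        rw [this, map_zero, Submodule.coe_zero]
      -- strict inequality via v ∈ ker g, v ≠ 0
      obtain ⟨xv, hxv⟩ := hfrs ↑v
      have hxvP : xv ∈ P := by
        rw [hPdef, Submodule.mem_comap, hxv]; exact v.2
      have hxvK2 : (xv : H) ∈ K2 := by
        apply hmemK2 xv hxvP
        rw [hval]
        have hcongr : (⟨fr ↑(⟨xv, hxvP⟩ : P), hmem xv hxvP⟩ : V) = v := Subtype.ext hxv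
        rw [hcongr, LinearMap.mem_ker.mp hvker, Submodule.coe_zero]
      have hxvKmax : (xv : H) ∉ Kmax := by
        rw [hKmaxeq]
        rintro ⟨y, hyker, hyeq⟩
        have : y = xv := Subtype.ext (by simpa using hyeq)
        subst this
        have hfy : f y = 0 := LinearMap.mem_ker.mp hyker
        have : (↑(fr y) : H) = f y := rfl
        rw [hxv, hfy] at this
        exact hv0 (Subtype.ext ((Submodule.coe_eq_zero).mp this))
      have hlt : K2 > Kmax := lt_of_le_of_ne hle (fun heq => hxvKmax (heq ▸ hxvK2))
      have hK2S : K2 ∈ S := by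
        refine ⟨?_, P.map N.subtype, h', hh'0, hK2⟩
        intro hc
        exact hKmax0 (le_bot_iff.mp (hc ▸ hle))
      exact hKmaxmax K2 hK2S hlt
    exact part1 ⟨U, hU0, hUM⟩
  · -- S empty: H itself satisfies the injectivity condition
    apply monoform_of_inj
    intro N f hf0
    by_contra hker
    apply hSne
    refine ⟨(LinearMap.ker f).map N.subtype, ⟨?_, N, f, hf0, rfl⟩⟩
    intro hc
    apply hker
    have := Submodule.map_injective_of_injective N.injective_subtype (by simpa using hc : (LinearMap.ker f).map N.subtype = Submodule.map N.subtype ⊥)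
    exact this
end

section
/- Let {H_λ}_{λ∈Λ} be a family of uniform modules and L a submodule of ⨁_{λ∈Λ} H_λ. Then there exists a subset Λ' ⊆ Λ such that the composite L ↪ ⨁_{λ∈Λ} H_λ ↠ ⨁_{λ∈Λ'} H_λ is injective and its image is an essential submodule of ⨁_{λ∈Λ'} H_λ. -/
open DirectSum

/-- A submodule `L` of `M` is *essential* if it meets every nonzero submodule
nontrivially. -/
def EssentialSubmodule {R : Type*} [Ring R] {M : Type*} [AddCommGroup M] [Module R M]
    (L : Submodule R M) : Prop :=
  ∀ N : Submodule R M, N ≠ ⊥ → L ⊓ N ≠ ⊥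

/-- A nonzero module is *uniform* if every nonzero submodule is essential. -/
def UniformModule (R : Type*) [Ring R] (M : Type*) [AddCommGroup M] [Module R M] : Prop :=
  Nontrivial M ∧ ∀ L : Submodule R M, L ≠ ⊥ → EssentialSubmodule L

section Aux

variable {R : Type*} [Ring R] {ι : Type*} (H : ι → Type*) [∀ i, AddCommGroup (H i)]
  [∀ i, Module R (H i)]

/-- The submodule of elements supported in `T`. -/
def suppSubmodule (T : Set ι) : Submodule R (⨁ i, H i) where
  carrier := {x | ∀ i ∉ T, x i = 0}
  add_mem' := by
    intro a b ha hb i hi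
    simp [DirectSum.add_apply, ha i hi, hb i hi]
  zero_mem' := by intro i hi; simp
  smul_mem' := by
    intro r x hx i hi
    simp [DirectSum.smul_apply, hx i hi]

/-- Projection onto a subset of coordinates. -/
noncomputable def projS (S : Set ι) : (⨁ i, H i) →ₗ[R] ⨁ i : S, H i :=
  haveI := Classical.decPred (· ∈ S)
  { toFun := DFinsupp.subtypeDomain (· ∈ S)
    map_add' := DFinsupp.subtypeDomain_add
    map_smul' := DFinsupp.subtypeDomain_smul }

@[simp] lemma projS_apply (S : Set ι) (x : ⨁ i, H i) (i : S) :
    projS (R := R) H S x i = x i.1 := by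
  haveI := Classical.decPred (· ∈ S)
  simp [projS, DFinsupp.subtypeDomain_apply]

lemma key_aux {σ : Type*} {G : σ → Type*} [∀ i, AddCommGroup (G i)]
    [∀ i, Module R (G i)] (hU : ∀ i, UniformModule R (G i)) (P : Submodule R (⨁ i, G i))
    (hP : ∀ i : σ, ∃ q ∈ P, q ≠ 0 ∧ ∀ j, j ≠ i → q j = 0) :
    ∀ (n : ℕ) (F : Finset σ) (x : ⨁ i, G i), F.card ≤ n → x ≠ 0 → (∀ j ∉ F, x j = 0) →
      ∃ r : R, r • x ∈ P ∧ r • x ≠ 0 := by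
  classical
  intro n
  induction n with
  | zero =>
    intro F x hF hx hsupp
    exfalso
    apply hx
    refine DFinsupp.ext fun j => ?_
    have hj : j ∉ F := by
      have : F = ∅ := Finset.card_eq_zero.mp (Nat.le_zero.mp hF)
      simp [this]
    simpa using hsupp j hj
  | succ n ih =>
    intro F x hF hx hsupp
    -- find a coordinate where x is nonzero
    have hex : ∃ i, x i ≠ 0 := by
      by_contra h
      push_neg at h
      exact hx (DFinsupp.ext fun j => by simpa using h j)
    obtain ⟨i, hxi⟩ := hex
    have hiF : i ∈ F := by
      by_contra h
      exact hxi (hsupp i h)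
    obtain ⟨q, hqP, hq0, hqs⟩ := hP i
    have hqi : q i ≠ 0 := by
      intro h
      apply hq0
      refine DFinsupp.ext fun j => ?_
      by_cases hj : j = i
      · subst hj; simpa using h
      · simpa using hqs j hj
    -- use uniformity of G i
    have hspanq : Submodule.span R {q i} ≠ ⊥ := by
      simpa [Submodule.span_singleton_eq_bot] using hqi
    have hspanx : Submodule.span R {x i} ≠ ⊥ := by
      simpa [Submodule.span_singleton_eq_bot] using hxi
    have hess := (hU i).2 _ hspanq _ hspanx
    obtain ⟨c, hc, hc0⟩ := (Submodule.ne_bot_iff _).mp hess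
    obtain ⟨s, hs⟩ := Submodule.mem_span_singleton.mp hc.1
    obtain ⟨r, hr⟩ := Submodule.mem_span_singleton.mp hc.2
    set y : ⨁ i, G i := r • x - s • q with hy
    have hyi : y i = 0 := by
      simp only [hy, DirectSum.sub_apply, DirectSum.smul_apply]
      rw [hr, hs, sub_self]
    have hyj : ∀ j, j ≠ i → y j = r • x j := by
      intro j hj
      simp only [hy, DirectSum.sub_apply, DirectSum.smul_apply, hqs j hj, smul_zero, sub_zero]
    have hrxi : (r • x) i = c := by rw [DirectSum.smul_apply, hr]
    by_cases hy0 : y = 0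
    · refine ⟨r, ?_, ?_⟩
      · have : r • x = s • q := by
          have := sub_eq_zero.mp (hy ▸ hy0)
          exact this
        rw [this]; exact P.smul_mem s hqP
      · intro h
        apply hc0
        rw [← hrxi, h, DirectSum.zero_apply]
    · have hysupp : ∀ j ∉ F.erase i, y j = 0 := by
        intro j hj
        by_cases hji : j = i
        · subst hji; exact hyi
        · have : j ∉ F := by
            intro hjF; exact hj (Finset.mem_erase.mpr ⟨hji, hjF⟩)
          rw [hyj j hji, hsupp j this, smul_zero]
      have hcard : (F.erase i).card ≤ n := by
        have := Finset.card_erase_of_mem hiF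
        omega
      obtain ⟨t, htP, ht0⟩ := ih (F.erase i) y hcard hy0 hysupp
      refine ⟨t * r, ?_, ?_⟩
      · have heq : (t * r) • x = t • y + (t * s) • q := by
          rw [mul_smul, mul_smul, hy]
          rw [smul_sub]
          abel
        rw [heq]
        exact P.add_mem htP (P.smul_mem _ hqP)
      · intro h
        apply ht0
        have heq2 : t • y = -((t * s) • q) := by
          have heq : (t * r) • x = t • y + (t * s) • q := by
            rw [mul_smul, mul_smul, hy, smul_sub]
            abel
          rw [h] at heq
          linear_combination (norm := abel) -heq
        refine DFinsupp.ext fun j => ?_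
        by_cases hji : j = i
        · subst hji
          simp [DirectSum.smul_apply, hyi]
        · have := congrArg (fun z : ⨁ i, G i => z j) heq2
          simp only at this
          rw [this, DFinsupp.neg_apply, DirectSum.smul_apply, hqs j hji, smul_zero, neg_zero,
            DirectSum.zero_apply]

lemma key {σ : Type*} {G : σ → Type*} [∀ i, AddCommGroup (G i)]
    [∀ i, Module R (G i)] (hU : ∀ i, UniformModule R (G i)) (P : Submodule R (⨁ i, G i))
    (hP : ∀ i : σ, ∃ q ∈ P, q ≠ 0 ∧ ∀ j, j ≠ i → q j = 0) :
    EssentialSubmodule P := by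
  classical
  intro N hN
  obtain ⟨x, hxN, hx⟩ := (Submodule.ne_bot_iff N).mp hN
  obtain ⟨r, hrP, hr⟩ := key_aux hU P hP x.support.card x.support x le_rfl hx
    (fun j hj => DFinsupp.notMem_support_iff.mp hj)
  intro h
  exact hr ((Submodule.eq_bot_iff _).mp h _ ⟨hrP, N.smul_mem r hxN⟩)

end Aux

/-- For a family of uniform modules `H_λ` and a submodule `L` of `⨁ H_λ`, there is a
subset `Λ'` of the index set such that the composite of the inclusion of `L` with the
projection onto `⨁_{λ ∈ Λ'} H_λ` is injective, with essential image. -/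
theorem submodule_of_directSum_of_uniform (R : Type*) [Ring R] (ι : Type*)
    (H : ι → Type*) [∀ i, AddCommGroup (H i)] [∀ i, Module R (H i)]
    (hU : ∀ i, UniformModule R (H i)) (L : Submodule R (⨁ i, H i)) :
    ∃ (S : Set ι) (f : L →ₗ[R] ⨁ i : S, H i),
      (∀ (x : L) (i : S), f x i = (x : ⨁ i, H i) i.1) ∧
      Function.Injective f ∧
      EssentialSubmodule (LinearMap.range f) := by
  classical
  set setS : Set (Set ι) := {T | L ⊓ suppSubmodule (R := R) H T = ⊥} with hsetS
  have hub : ∀ c ⊆ setS, IsChain (· ⊆ ·) c → ∃ ub ∈ setS, ∀ s ∈ c, s ⊆ ub := by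
    intro c hcS hchain
    rcases c.eq_empty_or_nonempty with hc | hc
    · refine ⟨∅, ?_, by simp [hc]⟩
      rw [hsetS, Set.mem_setOf_eq, eq_bot_iff]
      rintro x ⟨_, hx2⟩
      have : x = 0 := DFinsupp.ext fun j => by simpa using hx2 j (by simp)
      simp [this]
    · refine ⟨⋃₀ c, ?_, fun s hs => Set.subset_sUnion_of_mem hs⟩
      rw [hsetS, Set.mem_setOf_eq, eq_bot_iff]
      rintro x ⟨hxL, hxU⟩
      have hsub : ↑x.support ⊆ ⋃ T ∈ c, T := by
        intro j hj
        rw [Finset.mem_coe, DFinsupp.mem_support_iff] at hj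
        by_contra h
        rw [← Set.sUnion_eq_biUnion] at h
        exact hj (hxU j h)
      obtain ⟨U, hUc, hFU⟩ :=
        DirectedOn.exists_mem_subset_of_finset_subset_biUnion hc
          (hchain.directedOn) hsub
      have hxU' : x ∈ suppSubmodule (R := R) H U := by
        intro j hj
        by_contra h
        exact hj (hFU (Finset.mem_coe.mpr (DFinsupp.mem_support_iff.mpr h)))
      have := hcS hUc
      rw [hsetS, Set.mem_setOf_eq] at this
      have hx0 : x = 0 := by
        have : x ∈ (⊥ : Submodule R (⨁ i, H i)) := this ▸ Submodule.mem_inf.mpr ⟨hxL, hxU'⟩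
        simpa using this
      simp [hx0]
  obtain ⟨T, hT⟩ := zorn_subset setS hub
  -- T is maximal with L ⊓ suppSubmodule T = ⊥
  have hTmem : L ⊓ suppSubmodule (R := R) H T = ⊥ := hT.1
  refine ⟨Tᶜ, (projS (R := R) H Tᶜ).comp L.subtype, fun x i => by simp, ?_, ?_⟩
  · -- injectivity
    rw [← LinearMap.ker_eq_bot, eq_bot_iff]
    intro x hx
    rw [LinearMap.mem_ker] at hx
    have hxT : (x : ⨁ i, H i) ∈ suppSubmodule (R := R) H T := by
      intro j hj
      have : projS (R := R) H Tᶜ (x : ⨁ i, H i) ⟨j, hj⟩ = 0 := by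
        rw [show projS (R := R) H Tᶜ (x : ⨁ i, H i) = 0 from hx]
        simp
      simpa using this
    have : (x : ⨁ i, H i) = 0 := by
      have := hTmem ▸ Submodule.mem_inf.mpr ⟨x.2, hxT⟩
      simpa using this
    simpa [Submodule.mem_bot] using Subtype.ext this
  · -- essential image
    apply key (fun i : ↥Tᶜ => hU i.1)
    intro i
    have hiT : i.1 ∉ T := i.2
    have hT' : insert i.1 T ∉ setS := by
      intro hmem
      have := hT.2 hmem (Set.subset_insert _ _)
      exact hiT (this (Set.mem_insert _ _))
    rw [hsetS, Set.mem_setOf_eq] at hT'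
    obtain ⟨ℓ, hℓ, hℓ0⟩ := (Submodule.ne_bot_iff _).mp hT'
    obtain ⟨hℓL, hℓs⟩ := Submodule.mem_inf.mp hℓ
    refine ⟨(projS (R := R) H Tᶜ).comp L.subtype ⟨ℓ, hℓL⟩, ⟨⟨ℓ, hℓL⟩, rfl⟩, ?_, ?_⟩
    · intro h
      apply hℓ0
      have hℓT : ℓ ∈ suppSubmodule (R := R) H T := by
        intro j hj
        have : projS (R := R) H Tᶜ ℓ ⟨j, hj⟩ = 0 := by
          have : ((projS (R := R) H Tᶜ).comp L.subtype ⟨ℓ, hℓL⟩ : ⨁ i : ↥Tᶜ, H i.1) = 0 := h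
          rw [show projS (R := R) H Tᶜ ℓ = 0 from this]
          simp
        simpa using this
      have := hTmem ▸ Submodule.mem_inf.mpr ⟨hℓL, hℓT⟩
      simpa using this
    · intro j hji
      have hj' : j.1 ∉ insert i.1 T := by
        intro h
        rcases Set.mem_insert_iff.mp h with h | h
        · exact hji (Subtype.ext h)
        · exact j.2 h
      simpa using hℓs j.1 hj'
end

section
/- Let Λ be a semiprime right Noetherian ring. Then every essential right ideal of Λ contains a regular element (Goldie's regular element lemma). -/
/-- An ideal is *two-sided* if it is also closed under multiplication on the right. -/
def IsTwoSided {R : Type*} [Ring R] (I : Ideal R) : Prop :=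
  ∀ a ∈ I, ∀ b : R, a * b ∈ I

/-- A two-sided ideal `P` is *prime* if it is proper and whenever `I * J ⊆ P` for
two-sided ideals `I`, `J`, one of `I`, `J` is contained in `P`. -/
def IsPrimeTwoSidedIdeal {R : Type*} [Ring R] (P : Ideal R) : Prop :=
  IsTwoSided P ∧ P ≠ ⊤ ∧ ∀ I J : Ideal R, IsTwoSided I → IsTwoSided J →
    (∀ a ∈ I, ∀ b ∈ J, a * b ∈ P) → I ≤ P ∨ J ≤ P

/-- A *regular element* is a nonzero element `a` with `a * b ≠ 0` and `b * a ≠ 0`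
for every nonzero `b`. -/
def IsRegularElem {R : Type*} [Ring R] (a : R) : Prop :=
  a ≠ 0 ∧ ∀ b : R, b ≠ 0 → a * b ≠ 0 ∧ b * a ≠ 0

/-! Mathlib's `Ideal R` consists of left ideals, so the argument is the mirror image of the
right-handed one; `torsionOf R R a = {x | x * a = 0}` is the left annihilator of `a`.

Semiprimeness gives `x R x = 0 → x = 0`, and with ACC on left annihilators this puts a
non-nilpotent element `a` in every nonzero left ideal; a power `z = aⁿ` past the point where the
chain `lann (aᵏ)` stabilises satisfies `lann z ∩ R z = 0`. In the essential left ideal `I` take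
`a ∈ I` and a left ideal `M ∋ a` with `M ∩ lann a = 0`, `M` maximal. If `lann a ≠ 0`, such a `z`
in `I ∩ lann a` yields the larger pair `(a + z, M + R z)`; hence `lann a = 0`. Then `R a ≅ R` is
essential, so `a b = 0` makes `lann b` essential, which is impossible for `b ≠ 0`: some `z = t b`
as above has `lann z`, the preimage of `lann b` under `x ↦ x t`, essential and disjoint from `R z`.
-/

open Submodule
open Ideal (torsionOf mem_torsionOf_iff)

section Essential

variable {R M M' : Type*} [Ring R] [AddCommGroup M] [Module R M] [AddCommGroup M'] [Module R M']

theorem EssentialSubmodule.mono {E E' : Submodule R M} (hE : EssentialSubmodule E) (h : E ≤ E') :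
    EssentialSubmodule E' :=
  fun N hN hE'N => hE N hN (le_bot_iff.mp (hE'N ▸ inf_le_inf_right N h))

theorem EssentialSubmodule.comap {E : Submodule R M'} (hE : EssentialSubmodule E)
    (f : M →ₗ[R] M') : EssentialSubmodule (E.comap f) := by
  intro N hN hEN
  by_cases hfN : N.map f = ⊥
  · exact hN (le_bot_iff.mp (hEN ▸ le_inf (map_le_iff_le_comap.mp (hfN ▸ bot_le)) le_rfl))
  · obtain ⟨_, hy, hy0⟩ := (Submodule.ne_bot_iff _).mp (hE _ hfN)
    obtain ⟨hyE, n, hnN, rfl⟩ := mem_inf.mp hy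
    have hn : n ∈ E.comap f ⊓ N := mem_inf.mpr ⟨hyE, hnN⟩
    rw [hEN, mem_bot] at hn
    exact hy0 (by rw [hn, map_zero])

theorem mem_of_apply_mem_sup_map {f : M →ₗ[R] M'} (hf : Function.Injective f)
    {N : Submodule R M'} (hN : Disjoint (LinearMap.range f) N) {S : Submodule R M} {y : M}
    (hy : f y ∈ N ⊔ S.map f) : y ∈ S := by
  obtain ⟨n, hnN, _, ⟨s, hs, rfl⟩, hsum⟩ := mem_sup.mp hy
  have hn : n = 0 := disjoint_def.mp hN n
    ⟨y - s, by rw [map_sub, ← hsum, add_sub_cancel_right]⟩ hnN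
  rw [hn, zero_add] at hsum
  exact hf hsum ▸ hs

/-- If `N ≠ 0` meets `range f` trivially, the chain `N ⊆ N + f N ⊆ N + f N + f² N ⊆ ⋯` is strictly
increasing. -/
theorem EssentialSubmodule.range_of_injective [IsNoetherian R M] {f : M →ₗ[R] M}
    (hf : Function.Injective f) : EssentialSubmodule (LinearMap.range f) := by
  intro N hN hfN
  obtain ⟨x, hxN, hx0⟩ := (Submodule.ne_bot_iff N).mp hN
  let S : ℕ → Submodule R M := fun k => Nat.rec ⊥ (fun _ S => N ⊔ S.map f) k
  have hmono : Monotone S := monotone_nat_of_le_succ fun k => by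
    induction k with
    | zero => exact bot_le
    | succ k ih => exact sup_le_sup_left (map_mono ih) N
  have hmem : ∀ k, f^[k] x ∈ S (k + 1) := fun k => by
    induction k with
    | zero => exact mem_sup_left hxN
    | succ k ih =>
      rw [Function.iterate_succ_apply']
      exact mem_sup_right (mem_map_of_mem ih)
  have hnot : ∀ k, f^[k] x ∉ S k := fun k => by
    induction k with
    | zero => simpa [S] using hx0
    | succ k ih =>
      rw [Function.iterate_succ_apply']
      exact fun h => ih (mem_of_apply_mem_sup_map hf (disjoint_iff.mpr hfN) h)
  exact not_strictMono_of_wellFoundedGT S <| strictMono_nat_of_lt_succ fun k =>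
    SetLike.lt_iff_le_and_exists.mpr ⟨hmono k.le_succ, _, hmem k, hnot k⟩

end Essential

section Semiprime

variable {R : Type*} [Ring R]

theorem eq_zero_of_forall_mul_mul_eq_zero (hsp : sInf {P : Ideal R | IsPrimeTwoSidedIdeal P} = ⊥)
    {x : R} (hx : ∀ r, x * r * x = 0) : x = 0 := by
  set T : Ideal R := span R (Set.range (x * ·))
  have hxT : x ∈ T := subset_span ⟨1, mul_one x⟩
  have hT : _root_.IsTwoSided T := fun a ha b => by
    induction ha using span_induction with
    | mem _ h => obtain ⟨s, rfl⟩ := h; exact subset_span ⟨s * b, (mul_assoc x s b).symm⟩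
    | zero => simp
    | add u v _ _ hu hv => rw [add_mul]; exact T.add_mem hu hv
    | smul r u _ hu => rw [smul_eq_mul, mul_assoc]; exact T.smul_mem r hu
  have hxTx : ∀ b ∈ T, ∀ s, x * s * b = 0 := fun b hb => by
    induction hb using span_induction with
    | mem _ h => obtain ⟨t, rfl⟩ := h; intro s; rw [← mul_assoc, hx, zero_mul]
    | zero => simp
    | add u v _ _ hu hv => intro s; rw [mul_add, hu, hv, add_zero]
    | smul r u _ hu => intro s; rw [smul_eq_mul, ← mul_assoc, mul_assoc x, hu]
  have hTT : T ≤ T.annihilator := span_le.mpr fun _ ⟨s, hs⟩ =>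
    mem_annihilator.mpr fun b hb => hs ▸ hxTx b hb s
  rw [← mem_bot R, ← hsp, mem_sInf]
  intro P hP
  have hTP : ∀ a ∈ T, ∀ b ∈ T, a * b ∈ P := fun a ha b hb => by
    rw [← smul_eq_mul, mem_annihilator.mp (hTT ha) b hb]
    exact P.zero_mem
  exact (hP.2.2 T T hT hT hTP).elim (· hxT) (· hxT)

end Semiprime

section LeftAnnihilator

variable {R : Type*} [Ring R]

theorem disjoint_sup_span_torsionOf_add {M : Ideal R} {a z : R} (ha : a ∈ M)
    (hMa : Disjoint M (torsionOf R R a)) (hza : z * a = 0)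
    (hz : Disjoint (torsionOf R R z) (R ∙ z)) :
    Disjoint (M ⊔ R ∙ z) (torsionOf R R (a + z)) := by
  refine disjoint_def.mpr fun x hx hxaz => ?_
  obtain ⟨m, hm, y, hy, rfl⟩ := mem_sup.mp hx
  obtain ⟨r, rfl⟩ := mem_span_singleton.mp hy
  simp only [mem_torsionOf_iff, smul_eq_mul] at hxaz ⊢
  have hxa : (m + r * z) * a = 0 := by
    refine disjoint_def.mp hMa _ (M.smul_mem _ ha) ((mem_torsionOf_iff _ _).mpr ?_)
    calc (m + r * z) * a * a = (m + r * z) * (a + z) * a - (m + r * z) * (z * a) := by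
          noncomm_ring
      _ = 0 := by rw [hxaz, hza]; simp
  have hm0 : m = 0 := disjoint_def.mp hMa m hm <| (mem_torsionOf_iff _ _).mpr <| by
    rwa [add_mul, mul_assoc, hza, mul_zero, add_zero] at hxa
  subst hm0
  rw [zero_add] at hxa hxaz ⊢
  refine disjoint_def.mp hz _ ((mem_torsionOf_iff _ _).mpr ?_)
    (smul_mem _ r (mem_span_singleton_self z))
  simpa [mul_add, hxa] using hxaz

variable [IsNoetherianRing R]

/-- For `a` with maximal left annihilator, `a r a ≠ 0` would force `lann (a r a) = lann a`, hence
`(a r)ᵏ a ≠ 0` for every `k`, although `(a r)ᵏ a = a (r a)ᵏ` and `r a ∈ K` is nilpotent. -/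
theorem exists_ne_zero_forall_mul_mul_eq_zero_of_isNilpotent {K : Ideal R} (hK : K ≠ ⊥)
    (hnil : ∀ z ∈ K, IsNilpotent z) : ∃ a ∈ K, a ≠ 0 ∧ ∀ r, a * r * a = 0 := by
  obtain ⟨x, hxK, hx0⟩ := (Submodule.ne_bot_iff K).mp hK
  obtain ⟨_, ⟨a, ⟨haK, ha0⟩, rfl⟩, hmax⟩ := set_has_maximal_iff_noetherian.mpr inferInstance
    ((torsionOf R R ·) '' {y | y ∈ K ∧ y ≠ 0}) ⟨_, x, ⟨hxK, hx0⟩, rfl⟩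
  refine ⟨a, haK, ha0, fun r => by_contra fun hara => ?_⟩
  have hle : torsionOf R R a ≤ torsionOf R R (a * r * a) := fun t ht => by
    have hta : t * a = 0 := ht
    rw [mem_torsionOf_iff, smul_eq_mul, ← mul_assoc, ← mul_assoc, hta, zero_mul, zero_mul]
  have heq : torsionOf R R (a * r * a) = torsionOf R R a :=
    (hle.lt_or_eq.resolve_left (hmax _ ⟨_, ⟨K.smul_mem (a * r) haK, hara⟩, rfl⟩)).symm
  have hpow : ∀ k, (a * r) ^ k * a ≠ 0 := fun k => by
    induction k with
    | zero => simpa using ha0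
    | succ k ih =>
      intro h
      have : (a * r) ^ k ∈ torsionOf R R (a * r * a) := by
        rw [mem_torsionOf_iff, smul_eq_mul, ← h, pow_succ, mul_assoc, mul_assoc, mul_assoc]
      rw [heq, mem_torsionOf_iff] at this
      exact ih this
  obtain ⟨n, hn⟩ := hnil (r * a) (K.smul_mem r haK)
  apply hpow n
  rw [← ((show SemiconjBy a (r * a) (a * r) from (mul_assoc a r a).symm).pow_right n).eq,
    hn, mul_zero]

theorem exists_disjoint_torsionOf_span_pow (a : R) :
    ∃ n, Disjoint (torsionOf R R (a ^ (n + 1))) (R ∙ a ^ (n + 1)) := by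
  obtain ⟨n, hn⟩ := monotone_stabilizes_iff_noetherian.mpr inferInstance
    ⟨fun k => torsionOf R R (a ^ k), monotone_nat_of_le_succ fun k t ht => by
      have hta : t * a ^ k = 0 := ht
      rw [mem_torsionOf_iff, smul_eq_mul, pow_succ, ← mul_assoc, hta, zero_mul]⟩
  refine ⟨n, disjoint_def.mpr fun x hx hxa => ?_⟩
  obtain ⟨r, rfl⟩ := mem_span_singleton.mp hxa
  have hr : r ∈ torsionOf R R (a ^ (n + 1 + (n + 1))) := by
    rw [mem_torsionOf_iff, smul_eq_mul, pow_add, ← mul_assoc]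
    exact hx
  have h₁ : torsionOf R R (a ^ n) = torsionOf R R (a ^ (n + 1 + (n + 1))) := hn _ (by omega)
  have h₂ : torsionOf R R (a ^ n) = torsionOf R R (a ^ (n + 1)) := hn _ (by omega)
  rw [← h₁, h₂] at hr
  exact hr

variable (hsp : ∀ x : R, (∀ r, x * r * x = 0) → x = 0)
include hsp

theorem exists_not_isNilpotent_mem {K : Ideal R} (hK : K ≠ ⊥) : ∃ z ∈ K, ¬IsNilpotent z := by
  by_contra! hnil
  obtain ⟨a, -, ha0, ha⟩ := exists_ne_zero_forall_mul_mul_eq_zero_of_isNilpotent hK hnil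
  exact ha0 (hsp a ha)

theorem exists_ne_zero_disjoint_torsionOf_span {K : Ideal R} (hK : K ≠ ⊥) :
    ∃ z ∈ K, z ≠ 0 ∧ Disjoint (torsionOf R R z) (R ∙ z) := by
  obtain ⟨a, haK, ha⟩ := exists_not_isNilpotent_mem hsp hK
  obtain ⟨n, hn⟩ := exists_disjoint_torsionOf_span_pow a
  exact ⟨a ^ (n + 1), pow_succ a n ▸ K.smul_mem _ haK, fun h => ha ⟨n + 1, h⟩, hn⟩

theorem eq_zero_of_essential_torsionOf {b : R} (hb : EssentialSubmodule (torsionOf R R b)) :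
    b = 0 := by
  by_contra hb0
  obtain ⟨_, hz, hz0, hdisj⟩ :=
    exists_ne_zero_disjoint_torsionOf_span hsp (mt span_singleton_eq_bot.mp hb0)
  obtain ⟨t, rfl⟩ := mem_span_singleton.mp hz
  have hcomap : torsionOf R R (t • b) =
      Submodule.comap (LinearMap.toSpanSingleton R R t) (torsionOf R R b) := by
    ext; simp [mul_assoc]
  exact hb.comap _ (R ∙ t • b) (mt span_singleton_eq_bot.mp hz0) (hcomap ▸ hdisj.eq_bot)

theorem exists_mem_torsionOf_eq_bot {I : Ideal R} (hI : EssentialSubmodule I) :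
    ∃ a ∈ I, torsionOf R R a = ⊥ := by
  obtain ⟨M, ⟨a, haI, haM, hMa⟩, hmax⟩ := set_has_maximal_iff_noetherian.mpr inferInstance
    {M : Ideal R | ∃ a ∈ I, a ∈ M ∧ Disjoint M (torsionOf R R a)}
    ⟨⊥, 0, I.zero_mem, zero_mem _, disjoint_bot_left⟩
  refine ⟨a, haI, by_contra fun ha => ?_⟩
  obtain ⟨z, hz, hz0, hzz⟩ := exists_ne_zero_disjoint_torsionOf_span hsp (hI _ ha)
  obtain ⟨hzI, hza⟩ := mem_inf.mp hz
  have hzM : z ∉ M := fun h => hz0 (disjoint_def.mp hMa z h hza)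
  have hz_mem : z ∈ M ⊔ R ∙ z := mem_sup_right (mem_span_singleton_self z)
  exact hmax (M ⊔ R ∙ z)
    ⟨a + z, I.add_mem haI hzI, add_mem (mem_sup_left haM) hz_mem,
      disjoint_sup_span_torsionOf_add haM hMa hza hzz⟩
    (SetLike.lt_iff_le_and_exists.mpr ⟨le_sup_left, z, hz_mem, hzM⟩)

end LeftAnnihilator

/-- Goldie's regular element lemma: in a semiprime Noetherian ring, every essential
ideal contains a regular element. -/
theorem goldie_regular_element (R : Type*) [Ring R] [Nontrivial R] [IsNoetherianRing R]
    (hsp : sInf {P : Ideal R | IsPrimeTwoSidedIdeal P} = ⊥)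
    (I : Ideal R) (hI : EssentialSubmodule I) :
    ∃ a ∈ I, IsRegularElem a := by
  have hsemiprime : ∀ x : R, (∀ r, x * r * x = 0) → x = 0 :=
    fun _ => eq_zero_of_forall_mul_mul_eq_zero hsp
  obtain ⟨a, haI, ha⟩ := exists_mem_torsionOf_eq_bot hsemiprime hI
  have hRa : EssentialSubmodule (R ∙ a) := LinearMap.range_toSpanSingleton (R := R) a ▸
    EssentialSubmodule.range_of_injective (LinearMap.ker_eq_bot.mp ha)
  refine ⟨a, haI, fun ha0 => ?_, fun b hb => ⟨fun hab => hb ?_, fun hba => hb ?_⟩⟩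
  · simp [ha0] at ha
  · exact eq_zero_of_essential_torsionOf hsemiprime
      (hRa.mono (span_le.mpr (Set.singleton_subset_iff.mpr hab)))
  · exact (mem_bot R).mp (ha ▸ hba)
end

section
/- Let R be a commutative Noetherian ring. Every nonzero R-module contains a submodule isomorphic to R/𝔭 for some prime ideal 𝔭 of R, and R/𝔭 is monoform. -/
/-- The quotient of a commutative ring by a prime ideal is a monoform module. -/
lemma monoform_quotient_prime (R : Type*) [CommRing R] (p : Ideal R) (hp : p.IsPrime) :
    Monoform R (R ⧸ p) := by
  refine ⟨Ideal.Quotient.nontrivial_iff.mpr hp.ne_top, ?_⟩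
  rintro L hL N N' hN ⟨e⟩
  obtain ⟨l, hlL, hl0⟩ := Submodule.exists_mem_ne_zero_of_ne_bot hL
  obtain ⟨a, rfl⟩ := Ideal.Quotient.mk_surjective l
  have hap : a ∉ p := fun h => hl0 (Ideal.Quotient.eq_zero_iff_mem.mpr h)
  -- `a` annihilates the quotient `(R⧸p)⧸L`
  have ha : ∀ y : (R ⧸ p) ⧸ L, a • y = 0 := by
    intro y
    obtain ⟨z, rfl⟩ := Submodule.Quotient.mk_surjective L y
    obtain ⟨b, rfl⟩ := Ideal.Quotient.mk_surjective z
    rw [← Submodule.Quotient.mk_smul, Submodule.Quotient.mk_eq_zero]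
    have : a • (Ideal.Quotient.mk p b : R ⧸ p) = b • (Ideal.Quotient.mk p a) := by
      rw [← Ideal.Quotient.mk_eq_mk, ← Ideal.Quotient.mk_eq_mk,
        ← Submodule.Quotient.mk_smul, ← Submodule.Quotient.mk_smul,
        smul_eq_mul, smul_eq_mul, mul_comm]
    rw [this]
    exact L.smul_mem b hlL
  obtain ⟨n, hnN, hn0⟩ := Submodule.exists_mem_ne_zero_of_ne_bot hN
  have han : a • (⟨n, hnN⟩ : N) = 0 := by
    have : e (a • ⟨n, hnN⟩) = 0 := by
      rw [map_smul]
      exact Subtype.ext (by simpa using ha (e ⟨n, hnN⟩))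
    exact (map_eq_zero_iff e e.injective).mp this
  have han' : a • n = 0 := congrArg Subtype.val han
  obtain ⟨c, rfl⟩ := Ideal.Quotient.mk_surjective n
  rw [← Ideal.Quotient.mk_eq_mk, ← Submodule.Quotient.mk_smul,
    Submodule.Quotient.mk_eq_zero, smul_eq_mul] at han'
  rcases hp.mem_or_mem han' with h | h
  · exact hap h
  · exact hn0 (Ideal.Quotient.eq_zero_iff_mem.mpr h)

/-- Over a commutative Noetherian ring `R`, every nonzero module contains a submodule
isomorphic to `R ⧸ 𝔭` for some prime ideal `𝔭`, and `R ⧸ 𝔭` is monoform. -/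
theorem exists_monoform_prime_cyclic_submodule (R : Type*) [CommRing R]
    [IsNoetherianRing R] (M : Type*) [AddCommGroup M] [Module R M] [Nontrivial M] :
    ∃ p : Ideal R, p.IsPrime ∧
      (∃ K : Submodule R M, Nonempty ((R ⧸ p) ≃ₗ[R] K)) ∧
      Monoform R (R ⧸ p) := by
  obtain ⟨p, hp⟩ := associatedPrimes.nonempty R M
  obtain ⟨hprime, x, hx⟩ := isAssociatedPrime_iff.mp hp
  refine ⟨p, hprime, ⟨LinearMap.range (LinearMap.toSpanSingleton R M x), ⟨?_⟩⟩,
    monoform_quotient_prime R p hprime⟩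
  refine (Submodule.quotEquivOfEq _ _ ?_).trans
    (LinearMap.toSpanSingleton R M x).quotKerEquivRange
  ext r
  rw [LinearMap.mem_ker, LinearMap.toSpanSingleton_apply, hx,
    Submodule.mem_colon_singleton, Submodule.mem_bot]
end
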